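/- arXiv:2405.07489 — 3 statements merged into one kernel-verified Lean document; each statement's English description precedes it below -/
import Mathlib

section
/- Fix a dimension d and parameters λ > 0 and α ∈ [0,1]. Let g : ℝ^d × ℝ^d → ℝ satisfy: (i) for every fixed x₂ ∈ ℝ^d, the map x₁ ↦ g(x₁, x₂) is concave on ℝ^d; and (ii) for every fixed x₁ ∈ ℝ^d and all x₂, x₂' ∈ ℝ^d, |g(x₁, x₂) − g(x₁, x₂')| ≤ λα‖x₂ − x₂'‖₁. Define φ(x) = g(x, x) + λ(1−α)‖x‖₂². Then for all x, y ∈ ℝ^d and every γ ∈ [0,1]: φ(γx + (1−γ)y) ≥ γφ(x) + (1−γ)φ(y) − λγ(1−γ)(1−α)‖x − y‖₂² − λα‖x − y‖₁. -/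
open scoped BigOperators

lemma enot_norm_combo {d : ℕ} (x y : EuclideanSpace ℝ (Fin d)) (γ : ℝ) :
    ‖γ • x + (1 - γ) • y‖ ^ 2
      = γ * ‖x‖ ^ 2 + (1 - γ) * ‖y‖ ^ 2 - γ * (1 - γ) * ‖x - y‖ ^ 2 := by
  rw [← real_inner_self_eq_norm_sq x, ← real_inner_self_eq_norm_sq y,
    ← real_inner_self_eq_norm_sq (x - y), ← real_inner_self_eq_norm_sq (γ • x + (1 - γ) • y)]
  simp only [inner_add_add_self, inner_sub_sub_self, real_inner_smul_left,
    real_inner_smul_right, real_inner_comm x y]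
  ring

/-- if `g(x₁,x₂)` is concave in `x₁` for every fixed `x₂` and
`λα`-Lipschitz in ℓ¹ norm in `x₂` for every fixed `x₁`, then
`φ(x) = g(x,x) + λ(1−α)‖x‖₂²` is weakly concave:
`φ(γx+(1−γ)y) ≥ γφ(x)+(1−γ)φ(y) − λγ(1−γ)(1−α)‖x−y‖₂² − λα‖x−y‖₁`. -/
theorem enot_weak_concavity_combination {d : ℕ} (lam α : ℝ) (hlam : 0 < lam)
    (hα : α ∈ Set.Icc (0 : ℝ) 1)
    (g : EuclideanSpace ℝ (Fin d) → EuclideanSpace ℝ (Fin d) → ℝ)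
    (hconc : ∀ x₂, ConcaveOn ℝ Set.univ fun x₁ => g x₁ x₂)
    (hlip : ∀ x₁ x₂ x₂' : EuclideanSpace ℝ (Fin d),
      |g x₁ x₂ - g x₁ x₂'| ≤ lam * α * ∑ i, |x₂ i - x₂' i|)
    (φ : EuclideanSpace ℝ (Fin d) → ℝ)
    (hφ : ∀ x, φ x = g x x + lam * (1 - α) * ‖x‖ ^ 2) :
    ∀ x y : EuclideanSpace ℝ (Fin d), ∀ γ ∈ Set.Icc (0 : ℝ) 1,
      φ (γ • x + (1 - γ) • y) ≥
        γ * φ x + (1 - γ) * φ y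
          - lam * γ * (1 - γ) * (1 - α) * ‖x - y‖ ^ 2
          - lam * α * ∑ i, |x i - y i| := by
  intro x y γ hγ
  obtain ⟨hγ0, hγ1⟩ := hγ
  obtain ⟨hα0, hα1⟩ := hα
  set z := γ • x + (1 - γ) • y with hz
  set S := ∑ i, |x i - y i| with hS
  have hS0 : 0 ≤ S := Finset.sum_nonneg fun i _ => abs_nonneg _
  have h1 : γ * g x z + (1 - γ) * g y z ≤ g z z := by
    have := (hconc z).2 (Set.mem_univ x) (Set.mem_univ y) hγ0
      (show (0:ℝ) ≤ 1 - γ by linarith) (show γ + (1 - γ) = 1 by ring)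
    simpa [smul_eq_mul] using this
  have hxz : ∑ i, |x i - z i| = (1 - γ) * S := by
    rw [hS, Finset.mul_sum]
    refine Finset.sum_congr rfl fun i _ => ?_
    have : x i - z i = (1 - γ) * (x i - y i) := by
      simp only [hz, PiLp.add_apply, PiLp.smul_apply, smul_eq_mul]
      ring
    rw [this, abs_mul, abs_of_nonneg (by linarith : (0:ℝ) ≤ 1 - γ)]
  have hyz : ∑ i, |y i - z i| = γ * S := by
    rw [hS, Finset.mul_sum]
    refine Finset.sum_congr rfl fun i _ => ?_
    have : y i - z i = γ * (y i - x i) := by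
      simp only [hz, PiLp.add_apply, PiLp.smul_apply, smul_eq_mul]
      ring
    rw [this, abs_mul, abs_of_nonneg hγ0, abs_sub_comm]
  have h2 : g x x - g x z ≤ lam * α * ((1 - γ) * S) := by
    have := hlip x x z
    rw [hxz] at this
    exact (le_abs_self _).trans this
  have h3 : g y y - g y z ≤ lam * α * (γ * S) := by
    have := hlip y y z
    rw [hyz] at this
    exact (le_abs_self _).trans this
  have hnorm : ‖z‖ ^ 2 = γ * ‖x‖ ^ 2 + (1 - γ) * ‖y‖ ^ 2 - γ * (1 - γ) * ‖x - y‖ ^ 2 := by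
    rw [hz]; exact enot_norm_combo x y γ
  have hαS : 0 ≤ lam * α * S := by positivity
  have hγγ : lam * α * (2 * γ * (1 - γ)) * S ≤ lam * α * S := by
    nlinarith [mul_nonneg (mul_nonneg hlam.le hα0) hS0, sq_nonneg (2*γ - 1)]
  rw [hφ, hφ, hφ, hnorm]
  nlinarith [mul_le_mul_of_nonneg_left h2 hγ0,
    mul_le_mul_of_nonneg_left h3 (by linarith : (0:ℝ) ≤ 1 - γ)]
end

section
/- Fix a dimension d and parameters λ > 0 and α ∈ [0,1]. The elastic net cost with parameters λ and α is c(x,y) = λ(1−α)‖x−y‖₂² + λα‖x−y‖₁. Let ψ : ℝ^d → ℝ and define φ(x) = inf_{y ∈ ℝ^d} ( ψ(y) + c(x, y) ), and assume φ(x) > −∞ for every x ∈ ℝ^d. Then φ satisfies the weak concavity property: for all x, y ∈ ℝ^d and every γ ∈ [0,1], φ(γx + (1−γ)y) ≥ γφ(x) + (1−γ)φ(y) − λγ(1−γ)(1−α)‖x − y‖₂² − λα‖x − y‖₁. -/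
open scoped BigOperators RealInnerProductSpace

private lemma combo_norm_sq {E : Type*} [NormedAddCommGroup E] [InnerProductSpace ℝ E]
    (a b : E) (γ : ℝ) :
    ‖γ • a + (1 - γ) • b‖ ^ 2
      = γ * ‖a‖ ^ 2 + (1 - γ) * ‖b‖ ^ 2 - γ * (1 - γ) * ‖a - b‖ ^ 2 := by
  simp only [← @real_inner_self_eq_norm_sq E _ _, inner_add_add_self, inner_sub_sub_self,
    real_inner_smul_left, real_inner_smul_right]
  ring

/-- Theorem 1 of the paper: any c-transform
`φ(x) = inf_y ( ψ(y) + c(x,y) )` of the elastic net cost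
`c(x,y) = λ(1−α)‖x−y‖₂² + λα‖x−y‖₁`, assumed finite everywhere,
satisfies the weak concavity property
`φ(γx+(1−γ)y) ≥ γφ(x)+(1−γ)φ(y) − λγ(1−γ)(1−α)‖x−y‖₂² − λα‖x−y‖₁`. -/
theorem enot_c_transform_weakly_concave {d : ℕ} (lam α : ℝ) (hlam : 0 < lam)
    (hα : α ∈ Set.Icc (0 : ℝ) 1)
    (ψ : EuclideanSpace ℝ (Fin d) → ℝ)
    (φ : EuclideanSpace ℝ (Fin d) → ℝ)
    (hφ : ∀ x, φ x = sInf {r : ℝ | ∃ y : EuclideanSpace ℝ (Fin d),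
      r = ψ y + (lam * (1 - α) * ‖x - y‖ ^ 2 + lam * α * ∑ i, |x i - y i|)})
    (hbdd : ∀ x, BddBelow {r : ℝ | ∃ y : EuclideanSpace ℝ (Fin d),
      r = ψ y + (lam * (1 - α) * ‖x - y‖ ^ 2 + lam * α * ∑ i, |x i - y i|)}) :
    ∀ x y : EuclideanSpace ℝ (Fin d), ∀ γ ∈ Set.Icc (0 : ℝ) 1,
      φ (γ • x + (1 - γ) • y) ≥
        γ * φ x + (1 - γ) * φ y
          - lam * γ * (1 - γ) * (1 - α) * ‖x - y‖ ^ 2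
          - lam * α * ∑ i, |x i - y i| := by
  obtain ⟨hα0, hα1⟩ := hα
  intro x y γ ⟨hγ0, hγ1⟩
  have hla : 0 ≤ lam * α := mul_nonneg hlam.le hα0
  have hla' : 0 ≤ lam * (1 - α) := mul_nonneg hlam.le (by linarith)
  set m := γ • x + (1 - γ) • y with hm
  rw [hφ m, ge_iff_le]
  refine le_csInf ⟨_, ⟨x, rfl⟩⟩ ?_
  rintro r ⟨z, rfl⟩
  have hx : φ x ≤ ψ z + (lam * (1 - α) * ‖x - z‖ ^ 2 + lam * α * ∑ i, |x i - z i|) := by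
    rw [hφ x]; exact csInf_le (hbdd x) ⟨z, rfl⟩
  have hy : φ y ≤ ψ z + (lam * (1 - α) * ‖y - z‖ ^ 2 + lam * α * ∑ i, |y i - z i|) := by
    rw [hφ y]; exact csInf_le (hbdd y) ⟨z, rfl⟩
  have hmz : m - z = γ • (x - z) + (1 - γ) • (y - z) := by
    rw [hm]; module
  have hQ : ‖m - z‖ ^ 2
      = γ * ‖x - z‖ ^ 2 + (1 - γ) * ‖y - z‖ ^ 2 - γ * (1 - γ) * ‖x - y‖ ^ 2 := by
    rw [hmz, combo_norm_sq]
    congr 3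
    abel
  have hL : γ * ∑ i, |x i - z i| + (1 - γ) * ∑ i, |y i - z i|
      ≤ (∑ i, |m i - z i|) + ∑ i, |x i - y i| := by
    rw [Finset.mul_sum, Finset.mul_sum, ← Finset.sum_add_distrib, ← Finset.sum_add_distrib]
    apply Finset.sum_le_sum
    intro i _
    have hmi : m i = γ * x i + (1 - γ) * y i := by
      rw [hm]; simp [PiLp.add_apply, PiLp.smul_apply, smul_eq_mul]
    have hxz : x i - z i = (m i - z i) + (1 - γ) * (x i - y i) := by rw [hmi]; ring
    have hyz : y i - z i = (m i - z i) - γ * (x i - y i) := by rw [hmi]; ring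
    have h1 : |x i - z i| ≤ |m i - z i| + (1 - γ) * |x i - y i| := by
      rw [hxz]
      calc |(m i - z i) + (1 - γ) * (x i - y i)| ≤ |m i - z i| + |(1 - γ) * (x i - y i)| :=
            abs_add_le _ _
        _ = |m i - z i| + (1 - γ) * |x i - y i| := by
            rw [abs_mul, abs_of_nonneg (by linarith : (0:ℝ) ≤ 1 - γ)]
    have h2 : |y i - z i| ≤ |m i - z i| + γ * |x i - y i| := by
      rw [hyz]
      calc |(m i - z i) - γ * (x i - y i)| ≤ |m i - z i| + |γ * (x i - y i)| :=
            abs_sub _ _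
        _ = |m i - z i| + γ * |x i - y i| := by
            rw [abs_mul, abs_of_nonneg hγ0]
    have habs : 0 ≤ |x i - y i| := abs_nonneg _
    nlinarith [mul_le_of_le_one_left (abs_nonneg (m i - z i)) hγ1,
      sq_nonneg (2 * γ - 1)]
  nlinarith [mul_le_mul_of_nonneg_left hx hγ0,
    mul_le_mul_of_nonneg_left hy (by linarith : (0:ℝ) ≤ 1 - γ),
    mul_le_mul_of_nonneg_left hL hla,
    mul_nonneg hγ0 (by linarith : (0:ℝ) ≤ 1 - γ)]
end

section
/- Fix a dimension d and parameters λ > 0 and α ∈ [0,1). The elastic net cost with parameters λ and α is c(x,y) = λ(1−α)‖x−y‖₂² + λα‖x−y‖₁. Let φ : ℝ^d → ℝ be (Fréchet) differentiable at x ∈ ℝ^d with gradient ∇φ(x), let y ∈ ℝ^d, and suppose x maximizes x' ↦ φ(x') − c(x', y), i.e., φ(x') − c(x', y) ≤ φ(x) − c(x, y) for all x' ∈ ℝ^d. Then for every coordinate i ∈ {1,…,d}, xᵢ − yᵢ = ST_{α/(2(1−α))}( ∇φ(x)ᵢ / (2λ(1−α)) ), where ST_γ is the soft-thresholding operator with threshold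 γ ≥ 0 defined by ST_γ(z) = z+γ if z ≤ −γ, ST_γ(z) = 0 if −γ < z < γ, and ST_γ(z) = z−γ if z ≥ γ. Equivalently, x − y equals the coordinatewise soft-thresholding ST_{α/(2(1−α))}( ∇φ(x) / (2λ(1−α)) ). -/
open scoped BigOperators

/-- The soft-thresholding operator with threshold `γ`. -/
noncomputable def softThreshold (γ z : ℝ) : ℝ :=
  if z ≤ -γ then z + γ else if z < γ then 0 else z - γ

/-!
Restricted to the coordinate line `t ↦ x + t • eᵢ`, the function `φ - c(·, y)` is maximal at
`t = 0`. With `u = xᵢ - yᵢ`, `a = 2λ(1-α)` and `b = λα`, the cost along that line is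
`a u t + a t² / 2 + b |u + t|` up to a constant, so `g = ∂ᵢφ(x)` is a subgradient of
`s ↦ a s² / 2 + b |s|` at `u`: for `u ≠ 0` the cost is differentiable and Fermat's rule gives
`g = a u + b sign u`, while for `u = 0` the one-sided slopes give `|g| ≤ b`. Soft thresholding at
level `b / a` inverts exactly this relation, `u = ST_{b/a}(g / a)`.
-/

open Filter Topology

theorem softThreshold_eq_zero_of_abs_le {γ z : ℝ} (h : |z| ≤ γ) : softThreshold γ z = 0 := by
  obtain ⟨h₁, h₂⟩ := abs_le.mp h
  unfold softThreshold
  split_ifs <;> linarith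

theorem softThreshold_add_mul_sign {γ u : ℝ} (hγ : 0 ≤ γ) (hu : u ≠ 0) :
    softThreshold γ (u + γ * SignType.sign u) = u := by
  unfold softThreshold
  rcases hu.lt_or_gt with hu | hu
  · rw [sign_neg hu, SignType.coe_neg_one]
    split_ifs <;> linarith
  · rw [sign_pos hu, SignType.coe_one]
    split_ifs <;> linarith

theorem abs_le_of_hasDerivAt_of_sub_le {F : ℝ → ℝ} {g C b : ℝ} (hF : HasDerivAt F g 0)
    (h : ∀ t, F t - F 0 ≤ C * t ^ 2 + b * |t|) : |g| ≤ b := by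
  have hlin : ∀ c, Tendsto (fun t : ℝ => C * t + c) (𝓝 0) (𝓝 c) := fun c =>
    (continuous_const.mul continuous_id |>.add continuous_const).tendsto' 0 c (by simp)
  refine abs_le.mpr ⟨?_, ?_⟩
  · refine le_of_tendsto_of_tendsto ((hlin (-b)).mono_left nhdsWithin_le_nhds)
      hF.tendsto_slope_zero_left ?_
    filter_upwards [self_mem_nhdsWithin] with t (ht : t < 0)
    rw [zero_add, smul_eq_mul, ← div_eq_inv_mul, le_div_iff_of_neg ht]
    have := h t
    rw [abs_of_neg ht] at this
    linarith
  · refine le_of_tendsto_of_tendsto hF.tendsto_slope_zero_right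
      ((hlin b).mono_left nhdsWithin_le_nhds) ?_
    filter_upwards [self_mem_nhdsWithin] with t (ht : 0 < t)
    rw [zero_add, smul_eq_mul, ← div_eq_inv_mul, div_le_iff₀ ht]
    have := h t
    rw [abs_of_pos ht] at this
    linarith

theorem eq_softThreshold_of_hasDerivAt_of_sub_le {F : ℝ → ℝ} {g a b u : ℝ} (ha : 0 < a)
    (hb : 0 ≤ b) (hF : HasDerivAt F g 0)
    (h : ∀ t, F t - F 0 ≤ a * u * t + a / 2 * t ^ 2 + b * (|u + t| - |u|)) :
    u = softThreshold (b / a) (g / a) := by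
  rcases eq_or_ne u 0 with rfl | hu
  · refine (softThreshold_eq_zero_of_abs_le ?_).symm
    rw [abs_div, abs_of_pos ha]
    gcongr
    exact abs_le_of_hasDerivAt_of_sub_le hF fun t => by simpa using h t
  · set G : ℝ → ℝ := fun t => a * u * t + a / 2 * t ^ 2 + b * |u + t|
    have hG : HasDerivAt G (a * u + b * SignType.sign u) 0 := by
      have habs : HasDerivAt (fun t => |u + t|) (SignType.sign u : ℝ) 0 := by
        simpa using (hasDerivAt_abs (by simpa using hu)).comp_const_add u 0
      have hpoly : HasDerivAt (fun t => a * u * t + a / 2 * t ^ 2) (a * u) 0 :=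
        (((hasDerivAt_id' 0).const_mul (a * u)).add
          ((hasDerivAt_pow 2 0).const_mul (a / 2))).congr_deriv (by simp)
      exact hpoly.add (habs.const_mul b)
    have hG₀ : G 0 = b * |u| := by simp [G]
    have hextr : IsLocalMax (fun t => F t - G t) 0 :=
      Filter.Eventually.of_forall fun t => by
        show F t - G t ≤ F 0 - G 0
        linarith [h t, show G t = a * u * t + a / 2 * t ^ 2 + b * |u + t| from rfl]
    have hg : g = a * u + b * SignType.sign u :=
      sub_eq_zero.mp (hextr.hasDerivAt_eq_zero (hF.sub hG))
    rw [hg, add_div, mul_div_cancel_left₀ _ ha.ne', mul_div_right_comm]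
    exact (softThreshold_add_mul_sign (div_nonneg hb ha.le) hu).symm

theorem EuclideanSpace.norm_add_smul_single_sq {ι : Type*} [Fintype ι] [DecidableEq ι]
    (w : EuclideanSpace ℝ ι) (i : ι) (t : ℝ) :
    ‖w + t • EuclideanSpace.single i 1‖ ^ 2 = ‖w‖ ^ 2 + 2 * t * w i + t ^ 2 := by
  rw [norm_add_sq_real, real_inner_smul_right, EuclideanSpace.inner_single_right, norm_smul,
    PiLp.norm_single]
  simp only [Real.ringHom_apply, Real.norm_eq_abs, norm_one, mul_one, sq_abs]
  ring

theorem EuclideanSpace.sum_abs_add_smul_single_sub {ι : Type*} [Fintype ι] [DecidableEq ι]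
    (x y : EuclideanSpace ℝ ι) (i : ι) (t : ℝ) :
    ∑ j, |(x + t • EuclideanSpace.single i 1 : EuclideanSpace ℝ ι) j - y j| =
      ∑ j, |x j - y j| + (|x i - y i + t| - |x i - y i|) := by
  rw [← sub_eq_iff_eq_add', ← Finset.sum_sub_distrib,
    Finset.sum_eq_single_of_mem i (Finset.mem_univ i)]
  · simp [add_sub_right_comm]
  · intro j _ hj
    simp [hj]

theorem HasGradientAt.hasDerivAt_add_smul_single {ι : Type*} [Fintype ι] [DecidableEq ι]
    {φ : EuclideanSpace ℝ ι → ℝ} {g x : EuclideanSpace ℝ ι} (hφ : HasGradientAt φ g x) (i : ι) :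
    HasDerivAt (fun t : ℝ => φ (x + t • EuclideanSpace.single i 1)) (g i) 0 := by
  show HasLineDerivAt ℝ φ (g i) x (EuclideanSpace.single i 1)
  simpa [EuclideanSpace.inner_single_right] using
    (hasGradientAt_iff_hasFDerivAt.mp hφ).hasLineDerivAt (EuclideanSpace.single i 1)

/-- pointwise Brenier-type theorem for the elastic net cost:
if `φ` is differentiable at `x` with gradient `∇φ(x)` and `x` maximizes
`x' ↦ φ(x') − c(x', y)` where `c(x,y) = λ(1−α)‖x−y‖₂² + λα‖x−y‖₁`, then
`xᵢ − yᵢ = ST_{α/(2(1−α))}( ∇φ(x)ᵢ / (2λ(1−α)) )` for every coordinate `i`. -/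
theorem enot_brenier_pointwise {d : ℕ} (lam α : ℝ) (hlam : 0 < lam)
    (hα : α ∈ Set.Ico (0 : ℝ) 1)
    (φ : EuclideanSpace ℝ (Fin d) → ℝ)
    (x y gradφ : EuclideanSpace ℝ (Fin d))
    (hgrad : HasGradientAt φ gradφ x)
    (hmax : ∀ x' : EuclideanSpace ℝ (Fin d),
      φ x' - (lam * (1 - α) * ‖x' - y‖ ^ 2 + lam * α * ∑ i, |x' i - y i|) ≤
        φ x - (lam * (1 - α) * ‖x - y‖ ^ 2 + lam * α * ∑ i, |x i - y i|)) :
    ∀ i : Fin d,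
      x i - y i = softThreshold (α / (2 * (1 - α))) (gradφ i / (2 * lam * (1 - α))) := by
  obtain ⟨hα₀, hα₁⟩ := hα
  intro i
  set e : EuclideanSpace ℝ (Fin d) := EuclideanSpace.single i 1
  have hcost : ∀ t : ℝ, φ (x + t • e) - φ (x + (0 : ℝ) • e) ≤ 2 * lam * (1 - α) * (x i - y i) * t +
      2 * lam * (1 - α) / 2 * t ^ 2 + lam * α * (|x i - y i + t| - |x i - y i|) := fun t => by
    have h := hmax (x + t • e)
    rw [show x + t • e - y = x - y + t • e by abel, EuclideanSpace.norm_add_smul_single_sq,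
      EuclideanSpace.sum_abs_add_smul_single_sub, PiLp.sub_apply] at h
    rw [zero_smul, add_zero]
    linarith
  have ha : 0 < 2 * lam * (1 - α) := mul_pos (by positivity) (sub_pos.mpr hα₁)
  rw [eq_softThreshold_of_hasDerivAt_of_sub_le ha (by positivity)
    (hgrad.hasDerivAt_add_smul_single i) hcost]
  congr 1
  field_simp
end
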